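/- arXiv:1809.05665 — 2 statements merged into one kernel-verified Lean document; each statement's English description precedes it below -/
import Mathlib

section
/- Let 0 < p < 4 and ω² = p/4 with ω ∈ (−1,1). Then lim_{λ→ω} ( S_λ(Φ_λ) − S_λ(Φ_ω) ) / (λ−ω)² = 0, where λ ranges over (−1,1)∖{ω}. -/
/-!
Write `d(λ) = S_λ(Φ_λ)`. Since `S_λ` is affine in `λ`, `S_λ(Φ_ω) = d(ω) + (λ - ω) Q(Φ_ω)`,
and `d'(λ) = Q(Φ_λ)`; so the quotient is the second-order Taylor remainder of `d` at `ω`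
divided by `(λ - ω)²`, and it tends to `d''(ω) / 2`. Both `d` and `Q(Φ_λ)` are explicit: the
first integral `φ'² = (1 - λ²) φ² - 2/(p+2) |φ|^{p+2}` of the ground-state equation and the
reduction formula `∫ sech^{r+2} = r/(r+1) ∫ sech^r` give `d(λ) = c_p (1 - λ²)^{2/p + 1/2}` and
`Q(Φ_λ) = -(4 + p)/p · c_p · λ (1 - λ²)^{2/p - 1/2}`. Hence `d''(λ)` is a multiple of
`1 - (4/p) λ²`, which vanishes at the critical frequency.
-/

open MeasureTheory Real Filter

/-- The explicit ground state `φ_ω` of `-φ'' + (1-ω²)φ = φ^{p+1}`. -/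
noncomputable def phi (p ω : ℝ) : ℝ → ℝ := fun x =>
  ((p + 2) * (1 - ω ^ 2) / 2) ^ (1 / p) *
    Real.cosh (p / 2 * Real.sqrt (1 - ω ^ 2) * x) ^ (-(2 / p))

/-- Momentum `Q(u,v) = ∫ u v`. -/
noncomputable def Qm (u v : ℝ → ℝ) : ℝ := ∫ x : ℝ, u x * v x

/-- Energy `E(u,v) = ½∫((∂ₓu)² + u² + v²) - (1/(p+2))∫|u|^{p+2}`. -/
noncomputable def En (p : ℝ) (u v : ℝ → ℝ) : ℝ :=
  (1 / 2) * (∫ x : ℝ, ((deriv u x) ^ 2 + (u x) ^ 2 + (v x) ^ 2))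
    - (1 / (p + 2)) * ∫ x : ℝ, |u x| ^ (p + 2)

/-- Action `S_ω = E + ω Q`. -/
noncomputable def Sfun (p ω : ℝ) (u v : ℝ → ℝ) : ℝ := En p u v + ω * Qm u v

open Topology

lemma integrable_exp_neg_mul_abs {r : ℝ} (hr : 0 < r) :
    Integrable fun x : ℝ => exp (-r * |x|) := by
  rw [← integrableOn_univ, ← Set.Iic_union_Ioi (a := 0), integrableOn_union]
  constructor
  · exact (integrableOn_exp_mul_Iic hr 0).congr_fun
      (fun x hx => by simp [abs_of_nonpos (Set.mem_Iic.mp hx)]) measurableSet_Iic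
  · exact (integrableOn_exp_mul_Ioi (neg_neg_of_pos hr) 0).congr_fun
      (fun x hx => by simp [abs_of_pos (Set.mem_Ioi.mp hx)]) measurableSet_Ioi

lemma cosh_rpow_neg_le {r : ℝ} (hr : 0 ≤ r) (x : ℝ) :
    cosh x ^ (-r) ≤ 2 ^ r * exp (-r * |x|) := by
  have hcosh : exp |x| / 2 ≤ cosh x := by
    rw [cosh_eq]; linarith [exp_abs_le x]
  calc cosh x ^ (-r) ≤ (exp |x| / 2) ^ (-r) :=
        rpow_le_rpow_of_nonpos (by positivity) hcosh (by linarith)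
    _ = 2 ^ r * exp (-r * |x|) := by
        rw [div_rpow (exp_pos _).le zero_le_two, ← exp_mul, rpow_neg zero_le_two, div_inv_eq_mul,
          mul_comm, neg_mul, mul_comm |x|, neg_mul]

lemma integrable_cosh_rpow_neg {r : ℝ} (hr : 0 < r) :
    Integrable fun x : ℝ => cosh x ^ (-r) := by
  refine ((integrable_exp_neg_mul_abs hr).const_mul (2 ^ r)).mono'
    (continuous_cosh.rpow_const fun x => Or.inl (cosh_pos x).ne').aestronglyMeasurable
    (Eventually.of_forall fun x => ?_)
  rw [norm_of_nonneg (rpow_nonneg (cosh_pos x).le _)]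
  exact cosh_rpow_neg_le hr.le x

lemma tendsto_cosh_rpow_neg_cocompact {r : ℝ} (hr : 0 < r) :
    Tendsto (fun x : ℝ => cosh x ^ (-r)) (cocompact ℝ) (nhds 0) := by
  have hexp : Tendsto (fun x : ℝ => 2 ^ r * exp (-r * |x|)) (cocompact ℝ) (nhds 0) := by
    simpa using (tendsto_exp_atBot.comp
      ((tendsto_const_mul_atBot_of_neg (neg_neg_of_pos hr)).mpr
        (tendsto_norm_cocompact_atTop (E := ℝ)))).const_mul (2 ^ r)
  refine squeeze_zero (fun x => (rpow_pos_of_pos (cosh_pos x) _).le)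
    (fun x => cosh_rpow_neg_le hr.le x) hexp

lemma hasDerivAt_sinh_mul_cosh_rpow_neg (r x : ℝ) :
    HasDerivAt (fun x => sinh x * cosh x ^ (-(r + 1)))
      ((r + 1) * cosh x ^ (-(r + 2)) - r * cosh x ^ (-r)) x := by
  have hc := cosh_pos x
  refine ((hasDerivAt_sinh x).mul
    ((hasDerivAt_cosh x).rpow_const (p := -(r + 1)) (Or.inl hc.ne'))).congr_deriv ?_
  have h1 : cosh x ^ (-(r + 1)) = cosh x ^ (-(r + 2)) * cosh x := by
    rw [← rpow_add_one hc.ne']; ring_nf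
  have h2 : cosh x ^ (-r) = cosh x ^ (-(r + 2)) * cosh x ^ 2 := by
    rw [← rpow_add_natCast hc.ne']; norm_num
  rw [show -(r + 1) - 1 = -(r + 2) by ring, h1, h2]
  linear_combination (r + 1) * cosh x ^ (-(r + 2)) * cosh_sq' x

lemma integral_cosh_rpow_neg_add_two {r : ℝ} (hr : 0 < r) :
    ∫ x : ℝ, cosh x ^ (-(r + 2)) = r / (r + 1) * ∫ x : ℝ, cosh x ^ (-r) := by
  have hi := integrable_cosh_rpow_neg hr
  have hi2 := integrable_cosh_rpow_neg (show 0 < r + 2 by linarith)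
  have hlim : Tendsto (fun x => sinh x * cosh x ^ (-(r + 1))) (cocompact ℝ) (nhds 0) := by
    refine squeeze_zero_norm (fun x => ?_) (tendsto_cosh_rpow_neg_cocompact hr)
    have hc := cosh_pos x
    have hsinh : |sinh x| ≤ cosh x := by
      simpa [abs_sinh] using (sinh_lt_cosh |x|).le
    calc ‖sinh x * cosh x ^ (-(r + 1))‖ = |sinh x| * cosh x ^ (-(r + 1)) := by
          rw [norm_mul, norm_of_nonneg (rpow_nonneg hc.le _), norm_eq_abs]
      _ ≤ cosh x * cosh x ^ (-(r + 1)) := by gcongr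
      _ = cosh x ^ (-r) := by rw [mul_comm, ← rpow_add_one hc.ne']; ring_nf
  have hFTC := integral_of_hasDerivAt_of_tendsto (hasDerivAt_sinh_mul_cosh_rpow_neg r)
    ((hi2.const_mul _).sub (hi.const_mul _)) (hlim.mono_left atBot_le_cocompact)
    (hlim.mono_left atTop_le_cocompact)
  rw [integral_sub (hi2.const_mul _) (hi.const_mul _), integral_const_mul, integral_const_mul,
    sub_zero, sub_eq_zero] at hFTC
  field_simp
  linarith

lemma integral_cosh_mul_rpow_neg {b : ℝ} (hb : 0 < b) (r : ℝ) :
    ∫ x : ℝ, cosh (b * x) ^ (-r) = b⁻¹ * ∫ x : ℝ, cosh x ^ (-r) := by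
  rw [Measure.integral_comp_mul_left (fun x => cosh x ^ (-r)), abs_of_pos (inv_pos.mpr hb),
    smul_eq_mul]

theorem tendsto_taylor_remainder_div_sq {f f' : ℝ → ℝ} {a f'' : ℝ}
    (hf : ∀ᶠ x in 𝓝 a, HasDerivAt f (f' x) x) (hf' : HasDerivAt f' f'' a) :
    Tendsto (fun x => (f x - f a - (x - a) * f' a) / (x - a) ^ 2) (𝓝[≠] a) (𝓝 (f'' / 2)) := by
  have hN : ∀ᶠ x in 𝓝 a,
      HasDerivAt (fun x => f x - f a - (x - a) * f' a) (f' x - f' a) x :=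
    hf.mono fun x hx => ((hx.sub_const (f a)).sub
      (((hasDerivAt_id' x).sub_const a).mul_const (f' a))).congr_deriv (by ring)
  have hsq (x : ℝ) : HasDerivAt (fun x => (x - a) ^ 2) (2 * (x - a)) x :=
    (((hasDerivAt_id' x).sub_const a).pow 2).congr_deriv (by ring)
  have hcont : Continuous fun x : ℝ => (x - a) ^ 2 := by fun_prop
  refine HasDerivAt.lhopital_zero_nhdsNE (nhdsWithin_le_nhds hN) (.of_forall hsq)
    (eventually_nhdsWithin_of_forall fun x hx => by simpa [sub_eq_zero] using hx) ?_ ?_ ?_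
  · simpa using hN.self_of_nhds.continuousAt.continuousWithinAt.tendsto (s := {a}ᶜ)
  · simpa using (hcont.continuousAt (x := a)).continuousWithinAt.tendsto (s := {a}ᶜ)
  · refine ((hasDerivAt_iff_tendsto_slope.mp hf').div_const 2).congr fun x => ?_
    rw [slope_def_field, div_div, mul_comm]

noncomputable def phiAmplitude (p l : ℝ) : ℝ := ((p + 2) * (1 - l ^ 2) / 2) ^ (1 / p)

noncomputable def phiRate (p l : ℝ) : ℝ := p / 2 * √(1 - l ^ 2)

lemma phi_apply (p l x : ℝ) :
    phi p l x = phiAmplitude p l * cosh (phiRate p l * x) ^ (-(2 / p)) := rfl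

section GroundState

variable {p l : ℝ}

lemma phiAmplitude_pos (hp : 0 < p) (hl : l ^ 2 < 1) : 0 < phiAmplitude p l := by
  unfold phiAmplitude; apply rpow_pos_of_pos; nlinarith

lemma phiAmplitude_rpow (hp : 0 < p) (hl : l ^ 2 < 1) :
    phiAmplitude p l ^ p = (p + 2) * (1 - l ^ 2) / 2 := by
  rw [phiAmplitude, one_div, rpow_inv_rpow (by nlinarith) hp.ne']

lemma phiRate_pos (hp : 0 < p) (hl : l ^ 2 < 1) : 0 < phiRate p l := by
  unfold phiRate; have := sqrt_pos.mpr (sub_pos.mpr hl); positivity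

lemma phiAmplitude_sq_div_phiRate (hp : 0 < p) (hl : l ^ 2 < 1) :
    phiAmplitude p l ^ 2 / phiRate p l
      = ((p + 2) / 2) ^ (2 / p) / (p / 2) * (1 - l ^ 2) ^ (2 / p - 1 / 2) := by
  have hc : 0 < 1 - l ^ 2 := by linarith
  rw [phiAmplitude, phiRate, ← rpow_natCast, ← rpow_mul (by positivity),
    mul_comm (p + 2), mul_div_assoc, mul_rpow hc.le (by positivity), sqrt_eq_rpow,
    rpow_sub hc]
  field_simp
  norm_num
  ring

lemma phi_sq (p l x : ℝ) :
    phi p l x ^ 2 = phiAmplitude p l ^ 2 * cosh (phiRate p l * x) ^ (-(4 / p)) := by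
  rw [phi_apply, mul_pow, ← rpow_mul_natCast (cosh_pos _).le]
  ring_nf

lemma abs_phi_rpow (hp : 0 < p) (hl : l ^ 2 < 1) (x : ℝ) :
    |phi p l x| ^ (p + 2) = (p + 2) * (1 - l ^ 2) / 2 *
      (phiAmplitude p l ^ 2 * cosh (phiRate p l * x) ^ (-(4 / p + 2))) := by
  have hA := phiAmplitude_pos hp hl
  have hc := cosh_pos (phiRate p l * x)
  rw [phi_apply, abs_of_pos (by positivity), mul_rpow hA.le (rpow_nonneg hc.le _),
    ← rpow_mul hc.le, rpow_add hA, phiAmplitude_rpow hp hl, rpow_two]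
  field_simp
  ring_nf

lemma hasDerivAt_phi (p l x : ℝ) :
    HasDerivAt (phi p l) (-(phiAmplitude p l * (2 / p) * phiRate p l) *
      sinh (phiRate p l * x) * cosh (phiRate p l * x) ^ (-(2 / p + 1))) x := by
  have h := ((((hasDerivAt_id' x).const_mul (phiRate p l)).cosh).rpow_const
    (p := -(2 / p)) (Or.inl (cosh_pos _).ne')).const_mul (phiAmplitude p l)
  rw [show -(2 / p) - 1 = -(2 / p + 1) by ring] at h
  exact h.congr_deriv (by ring)

lemma deriv_phi_sq (hp : 0 < p) (hl : l ^ 2 < 1) (x : ℝ) :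
    deriv (phi p l) x ^ 2
      = (1 - l ^ 2) * phi p l x ^ 2 - 2 / (p + 2) * |phi p l x| ^ (p + 2) := by
  set c := cosh (phiRate p l * x)
  have hc : 0 < c := cosh_pos _
  set t := c ^ (-(4 / p + 2))
  have hrate : (2 / p * phiRate p l) ^ 2 = 1 - l ^ 2 := by
    rw [phiRate, mul_pow, mul_pow, sq_sqrt (by linarith)]
    field_simp
  have hsq : (c ^ (-(2 / p + 1))) ^ 2 = t := by
    rw [← rpow_mul_natCast hc.le]; congr 1; push_cast; ring
  have hshift : c ^ (-(4 / p)) = t * c ^ 2 := by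
    rw [← rpow_add_natCast hc.ne']; ring_nf
  have hcancel : 2 / (p + 2) * ((p + 2) * (1 - l ^ 2) / 2 * (phiAmplitude p l ^ 2 * t))
      = (1 - l ^ 2) * (phiAmplitude p l ^ 2 * t) := by
    field_simp
  rw [(hasDerivAt_phi p l x).deriv, phi_sq, abs_phi_rpow hp hl, hshift, hcancel]
  linear_combination -(phiAmplitude p l ^ 2 * t) * ((1 - l ^ 2) * cosh_sq' (phiRate p l * x)) +
    (phiAmplitude p l ^ 2 * sinh (phiRate p l * x) ^ 2) *
      (t * hrate + (2 / p * phiRate p l) ^ 2 * hsq)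

lemma integrable_phi_sq (hp : 0 < p) (hl : l ^ 2 < 1) : Integrable fun x => phi p l x ^ 2 := by
  simp only [phi_sq]
  exact ((integrable_cosh_rpow_neg (by positivity)).comp_mul_left'
    (phiRate_pos hp hl).ne').const_mul _

lemma integrable_abs_phi_rpow (hp : 0 < p) (hl : l ^ 2 < 1) :
    Integrable fun x => |phi p l x| ^ (p + 2) := by
  simp only [abs_phi_rpow hp hl]
  exact (((integrable_cosh_rpow_neg (by positivity)).comp_mul_left'
    (phiRate_pos hp hl).ne').const_mul _).const_mul _

noncomputable def massConst (p : ℝ) : ℝ :=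
  ((p + 2) / 2) ^ (2 / p) / (p / 2) * ∫ x : ℝ, cosh x ^ (-(4 / p))

lemma integral_phi_sq (hp : 0 < p) (hl : l ^ 2 < 1) :
    ∫ x, phi p l x ^ 2 = massConst p * (1 - l ^ 2) ^ (2 / p - 1 / 2) := by
  simp only [phi_sq]
  rw [integral_const_mul, integral_cosh_mul_rpow_neg (phiRate_pos hp hl), ← mul_assoc,
    ← div_eq_mul_inv, phiAmplitude_sq_div_phiRate hp hl, massConst]
  ring

lemma integral_abs_phi_rpow (hp : 0 < p) (hl : l ^ 2 < 1) :
    ∫ x, |phi p l x| ^ (p + 2) = 2 * (p + 2) / (p + 4) * (1 - l ^ 2) * ∫ x, phi p l x ^ 2 := by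
  have hrate := phiRate_pos hp hl
  simp only [abs_phi_rpow hp hl, phi_sq]
  rw [integral_const_mul, integral_const_mul, integral_const_mul,
    integral_cosh_mul_rpow_neg hrate, integral_cosh_mul_rpow_neg hrate,
    integral_cosh_rpow_neg_add_two (by positivity)]
  have : p + 4 ≠ 0 := by linarith
  field_simp
  ring

lemma Qm_groundState (p l : ℝ) :
    Qm (phi p l) (fun x => -l * phi p l x) = -l * ∫ x, phi p l x ^ 2 := by
  rw [Qm, ← integral_const_mul]
  congr 1 with x
  ring

lemma Sfun_groundState (hp : 0 < p) (hl : l ^ 2 < 1) :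
    Sfun p l (phi p l) (fun x => -l * phi p l x)
      = p / (p + 4) * (1 - l ^ 2) * ∫ x, phi p l x ^ 2 := by
  have hsq := integrable_phi_sq hp hl
  have habs := integrable_abs_phi_rpow hp hl
  have hgrad : ∫ x, (deriv (phi p l) x ^ 2 + phi p l x ^ 2 + (-l * phi p l x) ^ 2)
      = 2 * (∫ x, phi p l x ^ 2) - 2 / (p + 2) * ∫ x, |phi p l x| ^ (p + 2) := by
    rw [← integral_const_mul, ← integral_const_mul,
      ← integral_sub (hsq.const_mul _) (habs.const_mul _)]
    congr 1 with x
    rw [deriv_phi_sq hp hl]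
    ring
  rw [Sfun, En, Qm_groundState, hgrad, integral_abs_phi_rpow hp hl]
  set M := ∫ x, phi p l x ^ 2
  have : p + 4 ≠ 0 := by linarith
  have : p + 2 ≠ 0 := by linarith
  field_simp
  ring

end GroundState

section Frequency

variable {l : ℝ}

lemma eventually_sq_lt_one (hl : l ^ 2 < 1) : ∀ᶠ l' in 𝓝 l, l' ^ 2 < 1 :=
  (continuous_pow 2).continuousAt.eventually_lt continuousAt_const hl

lemma hasDerivAt_one_sub_sq_rpow (β : ℝ) (hl : l ^ 2 < 1) :
    HasDerivAt (fun l => (1 - l ^ 2) ^ β) (-(2 * β) * (l * (1 - l ^ 2) ^ (β - 1))) l :=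
  (((hasDerivAt_pow 2 l).const_sub 1).rpow_const (Or.inl (by linarith))).congr_deriv (by ring)

lemma hasDerivAt_mul_one_sub_sq_rpow (β : ℝ) (hl : l ^ 2 < 1) :
    HasDerivAt (fun l => l * (1 - l ^ 2) ^ β)
      ((1 - (2 * β + 1) * l ^ 2) * (1 - l ^ 2) ^ (β - 1)) l := by
  refine ((hasDerivAt_id' l).mul (hasDerivAt_one_sub_sq_rpow β hl)).congr_deriv ?_
  have hshift : (1 - l ^ 2) ^ β = (1 - l ^ 2) ^ (β - 1) * (1 - l ^ 2) := by
    rw [← rpow_add_one (by linarith)]; ring_nf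
  rw [hshift]
  ring

variable {p : ℝ}

lemma Qm_groundState_eq (hp : 0 < p) (hl : l ^ 2 < 1) :
    Qm (phi p l) (fun x => -l * phi p l x)
      = -massConst p * (l * (1 - l ^ 2) ^ (2 / p - 1 / 2)) := by
  rw [Qm_groundState, integral_phi_sq hp hl]
  ring

lemma Sfun_groundState_eq (hp : 0 < p) (hl : l ^ 2 < 1) :
    Sfun p l (phi p l) (fun x => -l * phi p l x)
      = p / (p + 4) * massConst p * (1 - l ^ 2) ^ (2 / p + 1 / 2) := by
  rw [Sfun_groundState hp hl, integral_phi_sq hp hl,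
    show 2 / p + 1 / 2 = (2 / p - 1 / 2) + 1 by ring, rpow_add_one (by linarith)]
  ring

lemma hasDerivAt_Sfun_groundState (hp : 0 < p) (hl : l ^ 2 < 1) :
    HasDerivAt (fun l => Sfun p l (phi p l) (fun x => -l * phi p l x))
      (Qm (phi p l) (fun x => -l * phi p l x)) l := by
  have h := ((hasDerivAt_one_sub_sq_rpow (2 / p + 1 / 2) hl).const_mul
    (p / (p + 4) * massConst p)).congr_of_eventuallyEq
    ((eventually_sq_lt_one hl).mono fun l' hl' => Sfun_groundState_eq hp hl')
  refine h.congr_deriv ?_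
  rw [Qm_groundState_eq hp hl, show 2 / p + 1 / 2 - 1 = 2 / p - 1 / 2 by ring]
  have : p + 4 ≠ 0 := by linarith
  field_simp
  ring

lemma hasDerivAt_Qm_groundState_of_sq_eq (hp : 0 < p) (hl : l ^ 2 < 1) (hcrit : l ^ 2 = p / 4) :
    HasDerivAt (fun l => Qm (phi p l) (fun x => -l * phi p l x)) 0 l := by
  have h := ((hasDerivAt_mul_one_sub_sq_rpow (2 / p - 1 / 2) hl).const_mul
    (-massConst p)).congr_of_eventuallyEq
    ((eventually_sq_lt_one hl).mono fun l' hl' => Qm_groundState_eq hp hl')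
  refine h.congr_deriv ?_
  rw [hcrit]
  field_simp
  ring

end Frequency

lemma Sfun_sub_Sfun (p l ω : ℝ) (u v : ℝ → ℝ) :
    Sfun p l u v - Sfun p ω u v = (l - ω) * Qm u v := by
  unfold Sfun
  ring

theorem S_difference_little_o_general (p ω : ℝ) (hp : 0 < p)
    (hω1 : -1 < ω) (hω2 : ω < 1) (hcrit : ω ^ 2 = p / 4) :
    Filter.Tendsto
      (fun l : ℝ =>
        (Sfun p l (phi p l) (fun x => -l * phi p l x)
          - Sfun p l (phi p ω) (fun x => -ω * phi p ω x)) / (l - ω) ^ 2)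
      (nhdsWithin ω (Set.Ioo (-1) 1 \ {ω})) (nhds 0) := by
  have hω : ω ^ 2 < 1 := by nlinarith
  have htaylor := tendsto_taylor_remainder_div_sq
    ((eventually_sq_lt_one hω).mono fun l hl => hasDerivAt_Sfun_groundState hp hl)
    (hasDerivAt_Qm_groundState_of_sq_eq hp hω hcrit)
  rw [zero_div] at htaylor
  refine (htaylor.mono_left (nhdsWithin_mono ω fun l hl => hl.2)).congr fun l => ?_
  have hlinear := Sfun_sub_Sfun p l ω (phi p ω) (fun x => -ω * phi p ω x)
  congr 1
  linarith

/-- At the critical frequency `ω² = p/4`,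
`S_λ(Φ_λ) - S_λ(Φ_ω) = o((λ-ω)²)` as `λ → ω` within `(-1,1) \ {ω}`. -/
theorem S_difference_little_o (p ω : ℝ) (hp : 0 < p) (hp4 : p < 4)
    (hω1 : -1 < ω) (hω2 : ω < 1) (hcrit : ω ^ 2 = p / 4) :
    Filter.Tendsto
      (fun l : ℝ =>
        (Sfun p l (phi p l) (fun x => -l * phi p l x)
          - Sfun p l (phi p ω) (fun x => -ω * phi p ω x)) / (l - ω) ^ 2)
      (nhdsWithin ω (Set.Ioo (-1) 1 \ {ω})) (nhds 0) :=
  S_difference_little_o_general p ω hp hω1 hω2 hcrit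
end

section
/- Let p > 0 and let I ⊆ ℝ be an open interval. Suppose u, v : I × ℝ → ℝ are continuously differentiable in (t,x), with u(t,·) three times continuously differentiable in x, solving the generalized Boussinesq system on I × ℝ, with u, v, ∂_x u, ∂_x²u, ∂_x³u, ∂_x v dominated locally uniformly in t by a fixed function in L¹(ℝ) ∩ L²(ℝ) and tending to 0 as |x| → ∞. Let φ ∈ C³(ℝ) with φ, φ', φ'', φ''' bounded, and let y : I → ℝ be continuously differentiable. Then I₂(t) = ∫_ℝ φ(x − y(t))·u(t,x)·v(t,x) dx is differentiable on I with I₂'(t) = −ẏ(t)·∫_ℝ φ'(x−y(t))·u·v dx − (1/2)∫_ℝ φ'(x−y(t))·( 3(∂_x u)² + v² + u² − (2(p+1)/(p+2))·|u|^{p+2} ) dx + (1/2)∫_ℝ φ'''(x−y(t))·u² dx. -/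
/-!
Differentiate `I₂` under the integral sign: near `t`, the `s`-derivative of
`φ (x - y s) u(s,x) v(s,x)` is dominated by a multiple of `g²`, once `|u|` is bounded uniformly
in time by the one-dimensional Sobolev estimate `u(x)² = -∫ₓ^∞ 2 u uₓ ≤ 2 ∫ g²` (this is what
controls the nonlinear term `|u|ᵖ uₓ`). By the system, the resulting integrand is
`-ẏ φ' u v + φ (vₓ v + u Gₓ)` with `G = -uₓₓ + u - |u|ᵖ u`; it differs from the claimed one by
the `x`-derivative of an explicit boundary term vanishing at infinity, so the integrals agree.
-/

open MeasureTheory Real Filter Set Topology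

lemma hasDerivAt_abs_rpow_mul {p : ℝ} (hp : 0 ≤ p) (r : ℝ) :
    HasDerivAt (fun r : ℝ => |r| ^ p * r) ((p + 1) * |r| ^ p) r := by
  have hpos : ∀ r : ℝ, 0 < r → HasDerivAt (fun r : ℝ => |r| ^ p * r) ((p + 1) * |r| ^ p) r := by
    intro r hr
    have h := Real.hasDerivAt_rpow_const (x := r) (p := p + 1) (Or.inl hr.ne')
    refine (h.congr_of_eventuallyEq ?_).congr_deriv (by simp [abs_of_pos hr])
    filter_upwards [eventually_gt_nhds hr] with s hs
    rw [abs_of_pos hs, Real.rpow_add_one hs.ne']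
  -- `|r| ^ p * r` is odd, so the negative half-line follows from the positive one.
  have hodd : (fun r : ℝ => |r| ^ p * r) = fun r => -(|-r| ^ p * -r) := by
    funext r; rw [abs_neg]; ring
  have hne : ∀ r ≠ 0, HasDerivAt (fun r : ℝ => |r| ^ p * r) ((p + 1) * |r| ^ p) r := by
    intro r hr
    rcases hr.lt_or_gt with hr | hr
    · rw [hodd]
      exact ((hpos (-r) (neg_pos.2 hr)).comp r (hasDerivAt_neg r)).fun_neg.congr_deriv
        (by rw [abs_neg]; ring)
    · exact hpos r hr
  have hcont : Continuous (fun r : ℝ => |r| ^ p) := (continuous_rpow_const hp).comp continuous_abs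
  exact hasDerivAt_of_hasDerivAt_of_ne' (x := 0) hne (hcont.mul continuous_id).continuousAt
    (continuous_const.mul hcont).continuousAt r

lemma hasDerivAt_abs_rpow_add_two_div {p : ℝ} (hp : -1 < p) (r : ℝ) :
    HasDerivAt (fun r : ℝ => |r| ^ (p + 2) / (p + 2)) (|r| ^ p * r) r := by
  refine ((hasDerivAt_abs_rpow r (by linarith : 1 < p + 2)).div_const (p + 2)).congr_deriv ?_
  have : p + 2 ≠ 0 := by linarith
  rw [add_sub_cancel_right]
  field_simp

lemma abs_rpow_add_two {p : ℝ} (hp : p + 2 ≠ 0) (r : ℝ) : |r| ^ (p + 2) = |r| ^ p * r ^ 2 := by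
  rw [Real.rpow_add' (abs_nonneg r) hp, Real.rpow_two, sq_abs]

lemma integrable_mul_of_abs_le {α : Type*} [MeasurableSpace α] {μ : Measure α}
    {f₁ f₂ g₁ g₂ : α → ℝ} (hf₁ : AEStronglyMeasurable f₁ μ) (hf₂ : AEStronglyMeasurable f₂ μ)
    (hg₁ : Integrable (fun x => g₁ x ^ 2) μ) (hg₂ : Integrable (fun x => g₂ x ^ 2) μ)
    (h₁ : ∀ x, |f₁ x| ≤ g₁ x) (h₂ : ∀ x, |f₂ x| ≤ g₂ x) :
    Integrable (fun x => f₁ x * f₂ x) μ := by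
  refine ((hg₁.add hg₂).div_const 2).mono' (hf₁.mul hf₂) (ae_of_all _ fun x => ?_)
  have := two_mul_le_add_sq |f₁ x| |f₂ x|
  have := pow_le_pow_left₀ (abs_nonneg _) (h₁ x) 2
  have := pow_le_pow_left₀ (abs_nonneg _) (h₂ x) 2
  simp only [Pi.add_apply, Real.norm_eq_abs, abs_mul]
  linarith

lemma integrable_sq_of_abs_le {α : Type*} [MeasurableSpace α] {μ : Measure α} {f g : α → ℝ}
    (hf : AEStronglyMeasurable f μ) (hg : Integrable (fun x => g x ^ 2) μ)
    (h : ∀ x, |f x| ≤ g x) : Integrable (fun x => f x ^ 2) μ := by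
  simpa [sq] using integrable_mul_of_abs_le hf hf hg hg h h

lemma integrable_comp_sub_mul {χ h : ℝ → ℝ} {M : ℝ} (hχ : Continuous χ)
    (hχM : ∀ x, |χ x| ≤ M) (c : ℝ) (hh : Integrable h) : Integrable fun x => χ (x - c) * h x :=
  hh.bdd_mul (hχ.comp (continuous_sub_right c)).aestronglyMeasurable
    (ae_of_all _ fun x => hχM (x - c))

lemma integrable_abs_rpow_add_two {α : Type*} [MeasurableSpace α] {μ : Measure α} {p C : ℝ}
    (hp : 0 ≤ p) {f : α → ℝ} (hf : AEStronglyMeasurable f μ) (hfC : ∀ x, |f x| ≤ C)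
    (hf2 : Integrable (fun x => f x ^ 2) μ) : Integrable (fun x => |f x| ^ (p + 2)) μ := by
  refine (hf2.bdd_mul (c := C ^ p) ((continuous_rpow_const hp).comp_aestronglyMeasurable
    (continuous_abs.comp_aestronglyMeasurable hf)) (ae_of_all _ fun x => ?_)).congr
    (ae_of_all _ fun x => (abs_rpow_add_two (by linarith) (f x)).symm)
  rw [norm_eq_abs, abs_of_nonneg (rpow_nonneg (abs_nonneg _) p)]
  exact rpow_le_rpow (abs_nonneg _) (hfC x) hp

lemma sq_le_two_mul_integral_sq {f f' g : ℝ → ℝ} (hf : ∀ x, HasDerivAt f (f' x) x)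
    (hfg : ∀ x, |f x| ≤ g x) (hf'g : ∀ x, |f' x| ≤ g x) (hg : Integrable (fun x => g x ^ 2))
    (htop : Tendsto f atTop (𝓝 0)) (x : ℝ) : f x ^ 2 ≤ 2 * ∫ y, g y ^ 2 := by
  have hf' : deriv f = f' := funext fun x => (hf x).deriv
  have hfc : Continuous f := Differentiable.continuous fun y => (hf y).differentiableAt
  have hint : Integrable (fun y => 2 * (f y * f' y)) :=
    (integrable_mul_of_abs_le hfc.aestronglyMeasurable (hf' ▸ aestronglyMeasurable_deriv f _)
      hg hg hfg hf'g).const_mul 2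
  have hsq : ∀ y, HasDerivAt (fun y => f y ^ 2) (2 * (f y * f' y)) y := fun y =>
    ((hf y).pow 2).congr_deriv (by ring)
  have hIoi : ∫ y in Ioi x, 2 * (f y * f' y) = 0 - f x ^ 2 :=
    integral_Ioi_of_hasDerivAt_of_tendsto (hsq x).continuousAt.continuousWithinAt
      (fun y _ => hsq y) hint.integrableOn (by simpa using htop.pow 2)
  have hbound : ∀ y, |2 * (f y * f' y)| ≤ 2 * g y ^ 2 := fun y => by
    rw [abs_mul, abs_mul, abs_two, sq]
    gcongr
    · exact (abs_nonneg _).trans (hfg y)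
    · exact hfg y
    · exact hf'g y
  calc f x ^ 2 = -∫ y in Ioi x, 2 * (f y * f' y) := by rw [hIoi]; ring
    _ ≤ ∫ y in Ioi x, |2 * (f y * f' y)| := (neg_le_abs _).trans abs_integral_le_integral_abs
    _ ≤ ∫ y in Ioi x, 2 * g y ^ 2 :=
      integral_mono hint.abs.integrableOn (hg.const_mul 2).integrableOn hbound
    _ ≤ ∫ y, 2 * g y ^ 2 :=
      setIntegral_le_integral (hg.const_mul 2) (ae_of_all _ fun y => by positivity)
    _ = 2 * ∫ y, g y ^ 2 := integral_const_mul 2 _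

lemma integral_eq_of_eq_add_deriv {F h W W' : ℝ → ℝ} (hW : ∀ x, HasDerivAt W (W' x) x)
    (hW0 : Tendsto W (cocompact ℝ) (𝓝 0)) (hF : Integrable F) (hh : Integrable h)
    (hFh : ∀ x, F x = h x + W' x) : ∫ x, F x = ∫ x, h x := by
  have hW' : Integrable W' := (hF.sub hh).congr (ae_of_all _ fun x => by simp [hFh x])
  have hW'0 : ∫ x, W' x = 0 := by
    simpa using integral_of_hasDerivAt_of_tendsto hW hW' (hW0.mono_left atBot_le_cocompact)
      (hW0.mono_left atTop_le_cocompact)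
  simp_rw [hFh]
  rw [integral_add hh hW', hW'0, add_zero]

-- The second equation of the system reads `∂ₜ v = ∂ₓ (boussinesqFlux p (u t))`.
noncomputable def boussinesqFlux (p : ℝ) (f : ℝ → ℝ) (x : ℝ) : ℝ :=
  -deriv (deriv f) x + f x - |f x| ^ p * f x

lemma hasDerivAt_boussinesqFlux {p : ℝ} (hp : 0 ≤ p) {f : ℝ → ℝ} (hf : ContDiff ℝ 3 f) (x : ℝ) :
    HasDerivAt (boussinesqFlux p f)
      (-deriv (deriv (deriv f)) x + deriv f x - (p + 1) * |f x| ^ p * deriv f x) x := by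
  have hf₁ : HasDerivAt f (deriv f x) x := (hf.differentiable (by norm_num) x).hasDerivAt
  have hf'' : ContDiff ℝ 1 (deriv (deriv f)) := (hf.deriv' : ContDiff ℝ 2 (deriv f)).deriv'
  have hf₃ : HasDerivAt (deriv (deriv f)) (deriv (deriv (deriv f)) x) x :=
    (hf''.differentiable one_ne_zero x).hasDerivAt
  have hN := (hasDerivAt_abs_rpow_mul hp (f x)).comp x hf₁
  exact (hf₃.neg.add hf₁).sub (hN.congr_deriv (by ring))

lemma abs_deriv_boussinesqFlux_le {p C : ℝ} (hp : 0 ≤ p) {f g : ℝ → ℝ} (hf : ContDiff ℝ 3 f)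
    (hfC : ∀ x, |f x| ≤ C) (hf₁ : ∀ x, |deriv f x| ≤ g x)
    (hf₃ : ∀ x, |deriv (deriv (deriv f)) x| ≤ g x) (x : ℝ) :
    |deriv (boussinesqFlux p f) x| ≤ (2 + (p + 1) * C ^ p) * g x := by
  rw [(hasDerivAt_boussinesqFlux hp hf x).deriv]
  have hpow : |f x| ^ p ≤ C ^ p := rpow_le_rpow (abs_nonneg _) (hfC x) hp
  have hN : |(p + 1) * |f x| ^ p * deriv f x| ≤ (p + 1) * C ^ p * g x := by
    rw [abs_mul, abs_mul, abs_of_nonneg (by linarith : 0 ≤ p + 1),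
      abs_of_nonneg (rpow_nonneg (abs_nonneg _) p)]
    exact mul_le_mul (mul_le_mul_of_nonneg_left hpow (by linarith)) (hf₁ x) (abs_nonneg _)
      (mul_nonneg (by linarith) (rpow_nonneg ((abs_nonneg _).trans (hfC x)) p))
  calc _ ≤ |deriv (deriv (deriv f)) x| + |deriv f x| + |(p + 1) * |f x| ^ p * deriv f x| := by
        refine (abs_sub _ _).trans (add_le_add_left ((abs_add_le _ _).trans ?_) _)
        rw [abs_neg]
    _ ≤ g x + g x + (p + 1) * C ^ p * g x := by gcongr <;> [exact hf₃ x; exact hf₁ x]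
    _ = (2 + (p + 1) * C ^ p) * g x := by ring

/- The boundary term collected by integrating the `∂ₜ I₂` integrand by parts; `ψ₁, ψ₂` and
`f₁, f₂` stand for the successive derivatives of `ψ` and `f`. -/
noncomputable def virialBoundaryTerm (p : ℝ) (ψ ψ₁ ψ₂ f f₁ f₂ w : ℝ → ℝ) (x : ℝ) : ℝ :=
  ψ x * (w x ^ 2 / 2 + f x ^ 2 / 2 - f x * f₂ x + f₁ x ^ 2 / 2
      - (p + 1) * (|f x| ^ (p + 2) / (p + 2)))
    + ψ₁ x * (f x * f₁ x) - ψ₂ x * f x ^ 2 / 2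

section VirialBoundaryTerm

variable {p : ℝ} {ψ ψ₁ ψ₂ ψ₃ f f₁ f₂ f₃ w w₁ : ℝ → ℝ}

lemma hasDerivAt_virialBoundaryTerm (hp : -1 < p) (hψ : ∀ x, HasDerivAt ψ (ψ₁ x) x)
    (hψ₁ : ∀ x, HasDerivAt ψ₁ (ψ₂ x) x) (hψ₂ : ∀ x, HasDerivAt ψ₂ (ψ₃ x) x)
    (hf : ∀ x, HasDerivAt f (f₁ x) x) (hf₁ : ∀ x, HasDerivAt f₁ (f₂ x) x)
    (hf₂ : ∀ x, HasDerivAt f₂ (f₃ x) x) (hw : ∀ x, HasDerivAt w (w₁ x) x) (x : ℝ) :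
    HasDerivAt (virialBoundaryTerm p ψ ψ₁ ψ₂ f f₁ f₂ w)
      (ψ x * (w x * w₁ x + f x * (-f₃ x + f₁ x - (p + 1) * |f x| ^ p * f₁ x))
        + 1 / 2 * (ψ₁ x * (3 * f₁ x ^ 2 + w x ^ 2 + f x ^ 2
            - 2 * (p + 1) / (p + 2) * |f x| ^ (p + 2)))
        - 1 / 2 * (ψ₃ x * f x ^ 2)) x := by
  have hN := (hasDerivAt_abs_rpow_add_two_div hp (f x)).comp x (hf x)
  have hE := (((((hw x).pow 2).div_const 2).add (((hf x).pow 2).div_const 2)).sub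
    ((hf x).mul (hf₂ x))).add (((hf₁ x).pow 2).div_const 2) |>.sub (hN.const_mul (p + 1))
  refine ((((hψ x).mul hE).add ((hψ₁ x).mul ((hf x).mul (hf₁ x)))).sub
    (((hψ₂ x).mul ((hf x).pow 2)).div_const 2)).congr_deriv ?_
  simp only [Pi.mul_apply, Pi.pow_apply, Pi.add_apply, Pi.sub_apply, Function.comp_apply,
    Nat.cast_ofNat]
  ring

lemma tendsto_virialBoundaryTerm {l : Filter ℝ} {M : ℝ} (hp : -2 < p) (hψ : ∀ x, |ψ x| ≤ M)
    (hψ₁ : ∀ x, |ψ₁ x| ≤ M) (hψ₂ : ∀ x, |ψ₂ x| ≤ M) (hf : Tendsto f l (𝓝 0))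
    (hf₁ : Tendsto f₁ l (𝓝 0)) (hf₂ : Tendsto f₂ l (𝓝 0)) (hw : Tendsto w l (𝓝 0)) :
    Tendsto (virialBoundaryTerm p ψ ψ₁ ψ₂ f f₁ f₂ w) l (𝓝 0) := by
  have bdd : ∀ {χ : ℝ → ℝ}, (∀ x, |χ x| ≤ M) → IsBoundedUnder (· ≤ ·) l (norm ∘ χ) :=
    fun h => isBoundedUnder_of ⟨M, h⟩
  have hN : Tendsto (fun x => |f x| ^ (p + 2)) l (𝓝 0) := by
    have := ((continuous_rpow_const (by linarith : 0 ≤ p + 2)).comp continuous_abs).tendsto 0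
    simpa [Function.comp_def, zero_rpow (by linarith : p + 2 ≠ 0)] using this.comp hf
  have hE := ((((hw.pow 2).div_const 2).add ((hf.pow 2).div_const 2)).sub (hf.mul hf₂)).add
    ((hf₁.pow 2).div_const 2) |>.sub ((hN.div_const (p + 2)).const_mul (p + 1))
  have := ((isBoundedUnder_le_mul_tendsto_zero (bdd hψ) (by simpa using hE)).add
    (isBoundedUnder_le_mul_tendsto_zero (bdd hψ₁) (by simpa using hf.mul hf₁))).sub
    (isBoundedUnder_le_mul_tendsto_zero (bdd hψ₂) (by simpa using (hf.pow 2).div_const 2))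
  rw [add_zero, sub_zero] at this
  exact this.congr fun x => by simp only [virialBoundaryTerm, mul_div_assoc]

end VirialBoundaryTerm

theorem integral_comp_sub_mul_boussinesq_eq {p M C : ℝ} (hp : 0 ≤ p) (a c : ℝ)
    {φ f w g : ℝ → ℝ} (hφ : ContDiff ℝ 3 φ)
    (hφM : ∀ x, |φ x| ≤ M ∧ |deriv φ x| ≤ M ∧ |deriv (deriv φ) x| ≤ M ∧
      |deriv (deriv (deriv φ)) x| ≤ M)
    (hf : ContDiff ℝ 3 f) (hw : ContDiff ℝ 1 w) (hg : Integrable fun x => g x ^ 2)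
    (hfC : ∀ x, |f x| ≤ C) (hfg : ∀ x, |f x| ≤ g x) (hf₁g : ∀ x, |deriv f x| ≤ g x)
    (hf₃g : ∀ x, |deriv (deriv (deriv f)) x| ≤ g x) (hwg : ∀ x, |w x| ≤ g x)
    (hw₁g : ∀ x, |deriv w x| ≤ g x) (hf0 : Tendsto f (cocompact ℝ) (𝓝 0))
    (hf₁0 : Tendsto (deriv f) (cocompact ℝ) (𝓝 0))
    (hf₂0 : Tendsto (deriv (deriv f)) (cocompact ℝ) (𝓝 0)) (hw0 : Tendsto w (cocompact ℝ) (𝓝 0)) :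
    ∫ x, (-a * (deriv φ (x - c) * f x * w x)
        + φ (x - c) * (deriv w x * w x + f x * deriv (boussinesqFlux p f) x))
      = -a * (∫ x, deriv φ (x - c) * f x * w x)
        - (1 / 2) * (∫ x, deriv φ (x - c) * (3 * (deriv f x) ^ 2 + (w x) ^ 2 + (f x) ^ 2
          - (2 * (p + 1) / (p + 2)) * |f x| ^ (p + 2)))
        + (1 / 2) * ∫ x, deriv (deriv (deriv φ)) (x - c) * (f x) ^ 2 := by
  have hφ' : ContDiff ℝ 2 (deriv φ) := hφ.deriv'
  have hφ'' : ContDiff ℝ 1 (deriv (deriv φ)) := hφ'.deriv'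
  have hf' : ContDiff ℝ 2 (deriv f) := hf.deriv'
  have hf'' : ContDiff ℝ 1 (deriv (deriv f)) := hf'.deriv'
  have hf_meas := hf.continuous.aestronglyMeasurable (μ := volume)
  have hw_meas := hw.continuous.aestronglyMeasurable (μ := volume)
  have hKg : Integrable fun x => ((2 + (p + 1) * C ^ p) * g x) ^ 2 := by
    simpa [mul_pow] using hg.const_mul ((2 + (p + 1) * C ^ p) ^ 2)
  have hfw := integrable_mul_of_abs_le hf_meas hw_meas hg hg hfg hwg
  have hD : Integrable fun x => -a * (deriv φ (x - c) * f x * w x) :=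
    ((integrable_comp_sub_mul hφ'.continuous (fun x => (hφM x).2.1) c hfw).congr
      (ae_of_all _ fun x => (mul_assoc _ _ _).symm)).const_mul _
  have hF : Integrable fun x => -a * (deriv φ (x - c) * f x * w x)
      + φ (x - c) * (deriv w x * w x + f x * deriv (boussinesqFlux p f) x) :=
    hD.add <| integrable_comp_sub_mul hφ.continuous (fun x => (hφM x).1) c <|
    (integrable_mul_of_abs_le (aestronglyMeasurable_deriv w _) hw_meas hg hg hw₁g hwg).add
      (integrable_mul_of_abs_le hf_meas (aestronglyMeasurable_deriv _ _) hg hKg hfg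
        (abs_deriv_boussinesqFlux_le hp hf hfC hf₁g hf₃g))
  have hf_sq := integrable_sq_of_abs_le hf_meas hg hfg
  have hQ : Integrable fun x => 3 * (deriv f x) ^ 2 + (w x) ^ 2 + (f x) ^ 2
      - (2 * (p + 1) / (p + 2)) * |f x| ^ (p + 2) :=
    ((((integrable_sq_of_abs_le (aestronglyMeasurable_deriv f _) hg hf₁g).const_mul 3).add
      (integrable_sq_of_abs_le hw_meas hg hwg)).add hf_sq).sub
      ((integrable_abs_rpow_add_two hp hf_meas hfC hf_sq).const_mul (2 * (p + 1) / (p + 2)))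
  have hA := (integrable_comp_sub_mul hφ'.continuous (fun x => (hφM x).2.1) c hQ).const_mul (1 / 2)
  have hB := (integrable_comp_sub_mul (hφ''.continuous_deriv le_rfl) (fun x => (hφM x).2.2.2) c
    hf_sq).const_mul (1 / 2)
  have hd : ∀ {χ : ℝ → ℝ} {n : WithTop ℕ∞}, ContDiff ℝ n χ → n ≠ 0 →
      ∀ x, HasDerivAt χ (deriv χ x) x :=
    fun hχ hn x => (hχ.differentiable hn x).hasDerivAt
  have hW := hasDerivAt_virialBoundaryTerm (p := p) (by linarith)
    (fun x => (hd hφ (by norm_num) (x - c)).comp_sub_const x c)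
    (fun x => (hd hφ' (by norm_num) (x - c)).comp_sub_const x c)
    (fun x => (hd hφ'' one_ne_zero (x - c)).comp_sub_const x c)
    (hd hf (by norm_num)) (hd hf' (by norm_num)) (hd hf'' one_ne_zero) (hd hw one_ne_zero)
  have hW0 := tendsto_virialBoundaryTerm (p := p) (M := M) (by linarith)
    (fun x => (hφM (x - c)).1) (fun x => (hφM (x - c)).2.1) (fun x => (hφM (x - c)).2.2.1)
    hf0 hf₁0 hf₂0 hw0
  rw [integral_eq_of_eq_add_deriv hW hW0 hF ((hD.sub hA).add hB) (fun x => ?_)]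
  · simp only [Pi.add_apply, Pi.sub_apply]
    rw [integral_add ?_ hB, integral_sub hD hA, integral_const_mul, integral_const_mul,
      integral_const_mul]
    exact hD.sub hA
  · rw [(hasDerivAt_boussinesqFlux hp hf x).deriv]
    simp only [Pi.add_apply, Pi.sub_apply]
    ring

lemma differentiableAt_fst_of_contDiffOn_prod {F : ℝ → ℝ → ℝ} {I : Set ℝ}
    (hF : ContDiffOn ℝ 1 (fun q : ℝ × ℝ => F q.1 q.2) (I ×ˢ univ)) (hI : IsOpen I) {s : ℝ}
    (hs : s ∈ I) (x : ℝ) : DifferentiableAt ℝ (fun s => F s x) s :=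
  ((hF.differentiableOn one_ne_zero).differentiableAt
    ((hI.prod isOpen_univ).mem_nhds ⟨hs, trivial⟩)).comp s
    (differentiableAt_id.prodMk (differentiableAt_const x))

lemma contDiff_snd_of_contDiffOn_prod {F : ℝ → ℝ → ℝ} {I : Set ℝ}
    (hF : ContDiffOn ℝ 1 (fun q : ℝ × ℝ => F q.1 q.2) (I ×ˢ univ)) {s : ℝ} (hs : s ∈ I) :
    ContDiff ℝ 1 (F s) := by
  rw [← contDiffOn_univ]
  exact hF.comp (contDiff_const.prodMk contDiff_id).contDiffOn fun x _ => ⟨hs, trivial⟩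

lemma hasDerivAt_comp_sub_mul_mul {I : Set ℝ} (hI : IsOpen I) {u v u' v' : ℝ → ℝ → ℝ}
    (hu : ContDiffOn ℝ 1 (fun q : ℝ × ℝ => u q.1 q.2) (I ×ˢ univ))
    (hv : ContDiffOn ℝ 1 (fun q : ℝ × ℝ => v q.1 q.2) (I ×ˢ univ))
    (hu' : ∀ t ∈ I, ∀ x, deriv (fun s => u s x) t = u' t x)
    (hv' : ∀ t ∈ I, ∀ x, deriv (fun s => v s x) t = v' t x) {φ y : ℝ → ℝ}
    (hφ : Differentiable ℝ φ) (hy : ContDiffOn ℝ 1 y I) {s : ℝ} (hs : s ∈ I) (x : ℝ) :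
    HasDerivAt (fun s => φ (x - y s) * u s x * v s x)
      (-deriv y s * (deriv φ (x - y s) * u s x * v s x)
        + φ (x - y s) * (u' s x * v s x + u s x * v' s x)) s := by
  have hys : HasDerivAt y (deriv y s) s :=
    ((hy.differentiableOn one_ne_zero).differentiableAt (hI.mem_nhds hs)).hasDerivAt
  have hφs := (hφ (x - y s)).hasDerivAt.comp s ((hasDerivAt_const s x).sub hys)
  have hus := (differentiableAt_fst_of_contDiffOn_prod hu hI hs x).hasDerivAt
  have hvs := (differentiableAt_fst_of_contDiffOn_prod hv hI hs x).hasDerivAt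
  rw [hu' s hs x] at hus
  rw [hv' s hs x] at hvs
  refine ((hφs.mul hus).mul hvs).congr_deriv ?_
  simp only [Function.comp_apply, Pi.mul_apply, Pi.sub_apply]
  ring

lemma abs_neg_mul_add_mul_le {a φ₀ φ₁ f w w₁ G A M K r : ℝ} (ha : |a| ≤ A) (hφ₀ : |φ₀| ≤ M)
    (hφ₁ : |φ₁| ≤ M) (hf : |f| ≤ r) (hw : |w| ≤ r) (hw₁ : |w₁| ≤ r) (hG : |G| ≤ K * r) :
    |-a * (φ₁ * f * w) + φ₀ * (w₁ * w + f * G)| ≤ (A * M + M * (1 + K)) * r ^ 2 := by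
  have hr : 0 ≤ r := (abs_nonneg _).trans hf
  have hM : 0 ≤ M := (abs_nonneg _).trans hφ₀
  have hA : 0 ≤ A := (abs_nonneg _).trans ha
  calc _ ≤ |a| * (|φ₁| * |f| * |w|) + |φ₀| * (|w₁| * |w| + |f| * |G|) := by
        refine (abs_add_le _ _).trans ?_
        simp only [abs_mul, abs_neg]
        gcongr
        exact (abs_add_le _ _).trans_eq (by rw [abs_mul, abs_mul])
    _ ≤ A * (M * r * r) + M * (r * r + r * (K * r)) := by gcongr
    _ = (A * M + M * (1 + K)) * r ^ 2 := by ring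

theorem hasDerivAt_integral_comp_sub_mul_mul {p M C : ℝ} (hp : 0 ≤ p) {I : Set ℝ} (hI : IsOpen I)
    {u v : ℝ → ℝ → ℝ}
    (hu : ContDiffOn ℝ 1 (fun q : ℝ × ℝ => u q.1 q.2) (I ×ˢ univ))
    (hv : ContDiffOn ℝ 1 (fun q : ℝ × ℝ => v q.1 q.2) (I ×ˢ univ))
    (hu3 : ∀ t ∈ I, ContDiff ℝ 3 (u t))
    (heq1 : ∀ t ∈ I, ∀ x, deriv (fun s => u s x) t = deriv (v t) x)
    (heq2 : ∀ t ∈ I, ∀ x, deriv (fun s => v s x) t = deriv (boussinesqFlux p (u t)) x)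
    {φ : ℝ → ℝ} (hφ : ContDiff ℝ 1 φ) (hφM : ∀ x, |φ x| ≤ M) (hφ'M : ∀ x, |deriv φ x| ≤ M)
    {y : ℝ → ℝ} (hy : ContDiffOn ℝ 1 y I) {t : ℝ} (ht : t ∈ I) {g : ℝ → ℝ}
    (hg : Integrable fun x => g x ^ 2)
    (hbound : ∀ᶠ s in 𝓝 t, ∀ x, |u s x| ≤ C ∧ |u s x| ≤ g x ∧ |v s x| ≤ g x ∧
      |deriv (u s) x| ≤ g x ∧ |deriv (deriv (deriv (u s))) x| ≤ g x ∧ |deriv (v s) x| ≤ g x) :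
    HasDerivAt (fun s => ∫ x, φ (x - y s) * u s x * v s x)
      (∫ x, -deriv y t * (deriv φ (x - y t) * u t x * v t x)
        + φ (x - y t) * (deriv (v t) x * v t x + u t x * deriv (boussinesqFlux p (u t)) x)) t := by
  have hyc : ContinuousAt (deriv y) t :=
    (hy.continuousOn_deriv_of_isOpen hI le_rfl).continuousAt (hI.mem_nhds ht)
  have hS := (hI.eventually_mem ht).and
    ((hyc.abs.eventually (gt_mem_nhds (lt_add_one |deriv y t|))).and hbound)
  have hshift : ∀ {χ : ℝ → ℝ}, Continuous χ → ∀ s, Continuous fun x => χ (x - y s) :=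
    fun hχ s => hχ.comp (continuous_sub_right _)
  have hvc : ∀ s ∈ I, Continuous (v s) := fun s hs =>
    (contDiff_snd_of_contDiffOn_prod hv hs).continuous
  have hbt := hS.self_of_nhds.2.2
  refine (hasDerivAt_integral_of_dominated_loc_of_deriv_le
    (F' := fun s x => -deriv y s * (deriv φ (x - y s) * u s x * v s x)
        + φ (x - y s) * (deriv (v s) x * v s x + u s x * deriv (boussinesqFlux p (u s)) x))
    (bound := fun x => ((|deriv y t| + 1) * M + M * (1 + (2 + (p + 1) * C ^ p))) * g x ^ 2)
    hS ?_ ?_ ?_ ?_ (hg.const_mul _) ?_).2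
  · filter_upwards [hI.mem_nhds ht] with s hs
    exact (((hshift hφ.continuous s).mul (hu3 s hs).continuous).mul (hvc s hs)).aestronglyMeasurable
  · refine ((integrable_mul_of_abs_le (hu3 t ht).continuous.aestronglyMeasurable
      (hvc t ht).aestronglyMeasurable hg hg (fun x => (hbt x).2.1) (fun x => (hbt x).2.2.1)).bdd_mul
      (hshift hφ.continuous t).aestronglyMeasurable (ae_of_all _ fun x => hφM _)).congr
      (ae_of_all _ fun x => (mul_assoc _ _ _).symm)
  · exact (aestronglyMeasurable_const.mul ((((hshift (hφ.continuous_deriv le_rfl) t).mul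
      (hu3 t ht).continuous).mul (hvc t ht)).aestronglyMeasurable)).add
      ((hshift hφ.continuous t).aestronglyMeasurable.mul
        (((aestronglyMeasurable_deriv _ _).mul (hvc t ht).aestronglyMeasurable).add
          ((hu3 t ht).continuous.aestronglyMeasurable.mul (aestronglyMeasurable_deriv _ _))))
  · refine ae_of_all _ fun x s ⟨hs, hys, hb⟩ => ?_
    obtain ⟨-, hu0, hv0, -, -, hv1⟩ := hb x
    exact abs_neg_mul_add_mul_le hys.le (hφM _) (hφ'M _) hu0 hv0 hv1
      (abs_deriv_boussinesqFlux_le hp (hu3 s hs) (fun x => (hb x).1) (fun x => (hb x).2.2.2.1)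
        (fun x => (hb x).2.2.2.2.1) x)
  · exact ae_of_all _ fun x s ⟨hs, _⟩ => hasDerivAt_comp_sub_mul_mul hI hu hv heq1 heq2
      (hφ.differentiable one_ne_zero) hy hs x

theorem virial_identity_I2_general (p : ℝ) (hp : 0 < p)
    (I : Set ℝ) (hIopen : IsOpen I)
    (u v : ℝ → ℝ → ℝ)
    (hu : ContDiffOn ℝ 1 (fun q : ℝ × ℝ => u q.1 q.2) (I ×ˢ Set.univ))
    (hv : ContDiffOn ℝ 1 (fun q : ℝ × ℝ => v q.1 q.2) (I ×ˢ Set.univ))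
    (hu3 : ∀ t ∈ I, ContDiff ℝ 3 (u t))
    (heq1 : ∀ t ∈ I, ∀ x : ℝ, deriv (fun s => u s x) t = deriv (v t) x)
    (heq2 : ∀ t ∈ I, ∀ x : ℝ,
      deriv (fun s => v s x) t
        = deriv (fun x' => -(deriv (deriv (u t)) x') + u t x'
            - |u t x'| ^ p * u t x') x)
    (hdom : ∀ t₀ ∈ I, ∃ δ > 0, ∃ g : ℝ → ℝ,
      Integrable g ∧ Integrable (fun x => (g x) ^ 2) ∧
      ∀ t ∈ I, |t - t₀| < δ → ∀ x : ℝ,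
        |u t x| ≤ g x ∧ |v t x| ≤ g x ∧ |deriv (u t) x| ≤ g x ∧
        |deriv (deriv (u t)) x| ≤ g x ∧
        |deriv (deriv (deriv (u t))) x| ≤ g x ∧ |deriv (v t) x| ≤ g x)
    (hdecay : ∀ t ∈ I,
      Tendsto (u t) (cocompact ℝ) (nhds 0) ∧
      Tendsto (v t) (cocompact ℝ) (nhds 0) ∧
      Tendsto (deriv (u t)) (cocompact ℝ) (nhds 0) ∧
      Tendsto (deriv (deriv (u t))) (cocompact ℝ) (nhds 0) ∧
      Tendsto (deriv (deriv (deriv (u t)))) (cocompact ℝ) (nhds 0) ∧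
      Tendsto (deriv (v t)) (cocompact ℝ) (nhds 0))
    (φ : ℝ → ℝ) (hφ : ContDiff ℝ 3 φ)
    (hφbdd : ∃ M : ℝ, ∀ x : ℝ, |φ x| ≤ M ∧ |deriv φ x| ≤ M ∧
      |deriv (deriv φ) x| ≤ M ∧ |deriv (deriv (deriv φ)) x| ≤ M)
    (y : ℝ → ℝ) (hy : ContDiffOn ℝ 1 y I) :
    ∀ t ∈ I,
      HasDerivAt (fun s => ∫ x : ℝ, φ (x - y s) * u s x * v s x)
        (-(deriv y t) * (∫ x : ℝ, deriv φ (x - y t) * u t x * v t x)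
          - (1 / 2) * (∫ x : ℝ, deriv φ (x - y t) *
              (3 * (deriv (u t) x) ^ 2 + (v t x) ^ 2 + (u t x) ^ 2
                - (2 * (p + 1) / (p + 2)) * |u t x| ^ (p + 2)))
          + (1 / 2) * ∫ x : ℝ, deriv (deriv (deriv φ)) (x - y t) * (u t x) ^ 2)
        t := by
  intro t ht
  obtain ⟨M, hM⟩ := hφbdd
  obtain ⟨δ, hδ, g, -, hg, hgb⟩ := hdom t ht
  have hnear : ∀ᶠ s in 𝓝 t, s ∈ I ∧ |s - t| < δ :=
    (hIopen.eventually_mem ht).and (Metric.ball_mem_nhds t hδ)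
  have hbound : ∀ᶠ s in 𝓝 t, ∀ x, |u s x| ≤ √(2 * ∫ x, g x ^ 2) ∧ |u s x| ≤ g x ∧
      |v s x| ≤ g x ∧ |deriv (u s) x| ≤ g x ∧ |deriv (deriv (deriv (u s))) x| ≤ g x ∧
      |deriv (v s) x| ≤ g x := by
    filter_upwards [hnear] with s ⟨hs, hst⟩ x
    obtain ⟨hu₀, hv₀, hu₁, -, hu₃, hv₁⟩ := hgb s hs hst x
    refine ⟨abs_le_sqrt ?_, hu₀, hv₀, hu₁, hu₃, hv₁⟩
    exact sq_le_two_mul_integral_sq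
      (fun x => ((hu3 s hs).differentiable (by norm_num) x).hasDerivAt)
      (fun x => (hgb s hs hst x).1) (fun x => (hgb s hs hst x).2.2.1) hg
      ((hdecay s hs).1.mono_left atTop_le_cocompact) x
  have hbt := hbound.self_of_nhds
  obtain ⟨hu0, hv0, hu₁0, hu₂0, -, -⟩ := hdecay t ht
  have h := hasDerivAt_integral_comp_sub_mul_mul hp.le hIopen hu hv hu3 heq1 heq2
    (hφ.of_le (by norm_num)) (fun x => (hM x).1) (fun x => (hM x).2.1) hy ht hg hbound
  rwa [integral_comp_sub_mul_boussinesq_eq hp.le (deriv y t) (y t) hφ hM (hu3 t ht)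
    (contDiff_snd_of_contDiffOn_prod hv ht) hg (fun x => (hbt x).1) (fun x => (hbt x).2.1)
    (fun x => (hbt x).2.2.2.1) (fun x => (hbt x).2.2.2.2.1) (fun x => (hbt x).2.2.1)
    (fun x => (hbt x).2.2.2.2.2) hu0 hu₁0 hu₂0 hv0] at h

/-- Localized virial identity for `I₂(t) = ∫ φ(x - y(t)) u v dx`, where
`(u,v)` solves the generalized Boussinesq system
`∂ₜu = ∂ₓv`, `∂ₜv = ∂ₓ(-∂ₓ²u + u - |u|^p u)` on an open interval `I`. -/
theorem virial_identity_I2 (p : ℝ) (hp : 0 < p)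
    (I : Set ℝ) (hIopen : IsOpen I) (hIconn : I.OrdConnected)
    (u v : ℝ → ℝ → ℝ)
    (hu : ContDiffOn ℝ 1 (fun q : ℝ × ℝ => u q.1 q.2) (I ×ˢ Set.univ))
    (hv : ContDiffOn ℝ 1 (fun q : ℝ × ℝ => v q.1 q.2) (I ×ˢ Set.univ))
    (hu3 : ∀ t ∈ I, ContDiff ℝ 3 (u t))
    (heq1 : ∀ t ∈ I, ∀ x : ℝ, deriv (fun s => u s x) t = deriv (v t) x)
    (heq2 : ∀ t ∈ I, ∀ x : ℝ,
      deriv (fun s => v s x) t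
        = deriv (fun x' => -(deriv (deriv (u t)) x') + u t x'
            - |u t x'| ^ p * u t x') x)
    (hdom : ∀ t₀ ∈ I, ∃ δ > 0, ∃ g : ℝ → ℝ,
      Integrable g ∧ Integrable (fun x => (g x) ^ 2) ∧
      ∀ t ∈ I, |t - t₀| < δ → ∀ x : ℝ,
        |u t x| ≤ g x ∧ |v t x| ≤ g x ∧ |deriv (u t) x| ≤ g x ∧
        |deriv (deriv (u t)) x| ≤ g x ∧
        |deriv (deriv (deriv (u t))) x| ≤ g x ∧ |deriv (v t) x| ≤ g x)
    (hdecay : ∀ t ∈ I,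
      Tendsto (u t) (cocompact ℝ) (nhds 0) ∧
      Tendsto (v t) (cocompact ℝ) (nhds 0) ∧
      Tendsto (deriv (u t)) (cocompact ℝ) (nhds 0) ∧
      Tendsto (deriv (deriv (u t))) (cocompact ℝ) (nhds 0) ∧
      Tendsto (deriv (deriv (deriv (u t)))) (cocompact ℝ) (nhds 0) ∧
      Tendsto (deriv (v t)) (cocompact ℝ) (nhds 0))
    (φ : ℝ → ℝ) (hφ : ContDiff ℝ 3 φ)
    (hφbdd : ∃ M : ℝ, ∀ x : ℝ, |φ x| ≤ M ∧ |deriv φ x| ≤ M ∧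
      |deriv (deriv φ) x| ≤ M ∧ |deriv (deriv (deriv φ)) x| ≤ M)
    (y : ℝ → ℝ) (hy : ContDiffOn ℝ 1 y I) :
    ∀ t ∈ I,
      HasDerivAt (fun s => ∫ x : ℝ, φ (x - y s) * u s x * v s x)
        (-(deriv y t) * (∫ x : ℝ, deriv φ (x - y t) * u t x * v t x)
          - (1 / 2) * (∫ x : ℝ, deriv φ (x - y t) *
              (3 * (deriv (u t) x) ^ 2 + (v t x) ^ 2 + (u t x) ^ 2
                - (2 * (p + 1) / (p + 2)) * |u t x| ^ (p + 2)))
          + (1 / 2) * ∫ x : ℝ, deriv (deriv (deriv φ)) (x - y t) * (u t x) ^ 2)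
        t :=
  virial_identity_I2_general p hp I hIopen u v hu hv hu3 heq1 heq2 hdom hdecay φ hφ hφbdd y hy
end
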